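/- Let m ≥ 1, n ≥ 1, 1 ≤ j ≤ m and 1 ≤ q ≤ n. In the mixed braid group B_{m,n}, the two algebraic expressions for a negative looping between a q-strand cable and the j-th fixed strand are equal: ∏_{i=0}^{q−1} λ_{1,i}^{−1} a_j^{−1} λ_{1,i} = ∏_{i=0}^{q−1} λ_{(q−1)−i,1} a_j^{−1} λ_{(q−1)−i,1}^{−1}, where both products are taken left to right in increasing order of i. -/

import Mathlib

/-- The free-group generator corresponding to the loop generator `a_{i+1}`. -/
def genA (m n : ℕ) (i : Fin m) : FreeGroup (Fin m ⊕ Fin (n - 1)) :=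
  FreeGroup.of (Sum.inl i)

/-- The free-group generator corresponding to the braiding generator `σ_{k+1}`. -/
def genS (m n : ℕ) (k : Fin (n - 1)) : FreeGroup (Fin m ⊕ Fin (n - 1)) :=
  FreeGroup.of (Sum.inr k)

/-- The defining relations of the mixed braid group `B_{m,n}`:
`σ_k σ_j = σ_j σ_k` for `|k-j| > 1`; `σ_k σ_{k+1} σ_k = σ_{k+1} σ_k σ_{k+1}`;
`a_i σ_k = σ_k a_i` for `k ≥ 2`; `a_i σ_1 a_i σ_1 = σ_1 a_i σ_1 a_i`;
`a_i (σ_1 a_r σ_1⁻¹) = (σ_1 a_r σ_1⁻¹) a_i` for `r < i`.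
(Indices of generators are 0-based: `Sum.inl i ↦ a_{i+1}`, `Sum.inr k ↦ σ_{k+1}`.) -/
def mixedRels (m n : ℕ) : Set (FreeGroup (Fin m ⊕ Fin (n - 1))) :=
  {x | ∃ k j : Fin (n - 1), (k : ℕ) + 2 ≤ (j : ℕ) ∧
      x = genS m n k * genS m n j * (genS m n k)⁻¹ * (genS m n j)⁻¹} ∪
  {x | ∃ k j : Fin (n - 1), (k : ℕ) + 1 = (j : ℕ) ∧
      x = genS m n k * genS m n j * genS m n k *
          (genS m n j)⁻¹ * (genS m n k)⁻¹ * (genS m n j)⁻¹} ∪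
  {x | ∃ (i : Fin m) (k : Fin (n - 1)), 1 ≤ (k : ℕ) ∧
      x = genA m n i * genS m n k * (genA m n i)⁻¹ * (genS m n k)⁻¹} ∪
  {x | ∃ (i : Fin m) (k : Fin (n - 1)), (k : ℕ) = 0 ∧
      x = genA m n i * genS m n k * genA m n i * genS m n k *
          (genA m n i)⁻¹ * (genS m n k)⁻¹ * (genA m n i)⁻¹ * (genS m n k)⁻¹} ∪
  {x | ∃ (i r : Fin m) (k : Fin (n - 1)), (r : ℕ) < (i : ℕ) ∧ (k : ℕ) = 0 ∧
      x = genA m n i * (genS m n k * genA m n r * (genS m n k)⁻¹) *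
          (genA m n i)⁻¹ * (genS m n k * genA m n r * (genS m n k)⁻¹)⁻¹}

/-- The mixed braid group `B_{m,n}`. -/
abbrev MixedBraid (m n : ℕ) := PresentedGroup (mixedRels m n)

/-- The loop generator `a_i` (1-based, `1 ≤ i ≤ m`); junk value `1` out of range. -/
def aGen (m n i : ℕ) : MixedBraid m n :=
  if h : 1 ≤ i ∧ i ≤ m then PresentedGroup.of (Sum.inl ⟨i - 1, by omega⟩) else 1

/-- The braiding generator `σ_k` (1-based, `1 ≤ k ≤ n-1`); junk value `1` out of range. -/
def sGen (m n k : ℕ) : MixedBraid m n :=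
  if h : 1 ≤ k ∧ k ≤ n - 1 then PresentedGroup.of (Sum.inr ⟨k - 1, by omega⟩) else 1

/-- `λ_{l,1} := σ_l σ_{l-1} ⋯ σ_1`, with `λ_{0,1} := 1`. -/
def lamD (m n l : ℕ) : MixedBraid m n :=
  ((List.range l).map (fun t => sGen m n (l - t))).prod

/-- `λ_{1,l} := σ_1 σ_2 ⋯ σ_l`, with `λ_{1,0} := 1`. -/
def lamU (m n l : ℕ) : MixedBraid m n :=
  ((List.range l).map (fun t => sGen m n (t + 1))).prod

/-!
Write `A = a_j⁻¹`, `u_i = λ_{1,i}⁻¹ A λ_{1,i}`, `v_l = λ_{l,1} A λ_{l,1}⁻¹` and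
`C_q = v_{q-1} ⋯ v_1 v_0`; the claim is `u_0 u_1 ⋯ u_{q-1} = C_q`, which by induction on `q`
reduces to `C_q u_q = v_q C_q`. Since `u_{q+1} = σ⁻¹ u_q σ` and `v_{q+1} = σ v_q σ⁻¹` for
`σ = σ_{q+1}`, and `C_q` commutes with `σ`, the inductive step needs exactly the length-four
relation `v_q σ⁻¹ v_q σ⁻¹ = σ⁻¹ v_q σ⁻¹ v_q`. For `q = 0` it is the inverse of
`a_j σ_1 a_j σ_1 = σ_1 a_j σ_1 a_j`, and it propagates because, by the braid relation,
conjugation by `σ_{l+1} σ_{l+2}` sends `v_l ↦ v_{l+1}` and `σ_{l+1} ↦ σ_{l+2}`.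
-/

section BraidRel4

variable {G : Type*} [Group G]

def BraidRel4 (x y : G) : Prop := x * y * x * y = y * x * y * x

theorem BraidRel4.inv {x y : G} (h : BraidRel4 x y) : BraidRel4 x⁻¹ y⁻¹ :=
  calc x⁻¹ * y⁻¹ * x⁻¹ * y⁻¹ = (y * x * y * x)⁻¹ := by group
    _ = (x * y * x * y)⁻¹ := by rw [h]
    _ = y⁻¹ * x⁻¹ * y⁻¹ * x⁻¹ := by group

theorem BraidRel4.conj {x y : G} (h : BraidRel4 x y) (g : G) :
    BraidRel4 (g * x * g⁻¹) (g * y * g⁻¹) := by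
  have := congrArg (MulAut.conj g) h
  simpa only [BraidRel4, map_mul, MulAut.conj_apply] using this

theorem BraidRel4.conj_braid {w s t : G} (h : BraidRel4 w t⁻¹) (hws : Commute w s)
    (hst : t * s * t = s * t * s) : BraidRel4 (t * w * t⁻¹) s⁻¹ := by
  have hw : t * s * w * (t * s)⁻¹ = t * w * t⁻¹ :=
    calc t * s * w * (t * s)⁻¹ = t * (s * w * s⁻¹) * t⁻¹ := by group
      _ = t * w * t⁻¹ := by rw [hws.symm.mul_inv_cancel]
  have ht : t * s * t⁻¹ * (t * s)⁻¹ = s⁻¹ :=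
    calc t * s * t⁻¹ * (t * s)⁻¹ = t * s * (t * s * t)⁻¹ := by group
      _ = t * s * (s * t * s)⁻¹ := by rw [hst]
      _ = s⁻¹ := by group
  simpa only [hw, ht] using h.conj (t * s)

theorem BraidRel4.conj_mul_eq {w s C u : G} (h : BraidRel4 w s⁻¹) (hC : Commute C s)
    (hu : C * u = w * C) : w * C * (s⁻¹ * u * s) = s * w * s⁻¹ * (w * C) := by
  obtain rfl : u = C⁻¹ * w * C := by rw [mul_assoc, ← hu]; group
  calc w * C * (s⁻¹ * (C⁻¹ * w * C) * s)
      = w * (C * s⁻¹ * C⁻¹) * w * (C * s * C⁻¹) * C := by group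
    _ = s * (s⁻¹ * w * s⁻¹ * w) * s * C := by
        rw [hC.inv_right.mul_inv_cancel, hC.mul_inv_cancel]; group
    _ = s * (w * s⁻¹ * w * s⁻¹) * s * C := by rw [← h]
    _ = s * w * s⁻¹ * (w * C) := by group

end BraidRel4

namespace MixedBraid

def negLoopU (m n j i : ℕ) : MixedBraid m n := (lamU m n i)⁻¹ * (aGen m n j)⁻¹ * lamU m n i

def negLoopD (m n j l : ℕ) : MixedBraid m n := lamD m n l * (aGen m n j)⁻¹ * (lamD m n l)⁻¹

def negCableLoopU (m n j q : ℕ) : MixedBraid m n := ((List.range q).map (negLoopU m n j)).prod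

def negCableLoopD (m n j q : ℕ) : MixedBraid m n :=
  ((List.range q).map fun i => negLoopD m n j (q - 1 - i)).prod

variable {m n j : ℕ}

theorem sGen_commute_sGen {k l : ℕ} (h : k + 2 ≤ l) : Commute (sGen m n k) (sGen m n l) := by
  unfold sGen
  split_ifs with hk hl
  · exact PresentedGroup.mk_eq_mk_of_mul_inv_mem (x := genS m n _ * genS m n _)
      (y := genS m n _ * genS m n _) <| Or.inl <| Or.inl <| Or.inl <| Or.inl
        ⟨⟨k - 1, by omega⟩, ⟨l - 1, by omega⟩, by simp only; omega, by group⟩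
  all_goals simp

theorem sGen_braid {k : ℕ} (hk : 1 ≤ k) (hkn : k + 1 ≤ n - 1) :
    sGen m n k * sGen m n (k + 1) * sGen m n k
      = sGen m n (k + 1) * sGen m n k * sGen m n (k + 1) := by
  unfold sGen
  rw [dif_pos ⟨hk, by omega⟩, dif_pos ⟨by omega, hkn⟩]
  exact PresentedGroup.mk_eq_mk_of_mul_inv_mem
    (x := genS m n _ * genS m n _ * genS m n _) (y := genS m n _ * genS m n _ * genS m n _)
    <| Or.inl <| Or.inl <| Or.inl <| Or.inr
      ⟨⟨k - 1, by omega⟩, ⟨k + 1 - 1, by omega⟩, by simp only; omega, by group⟩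

theorem aGen_commute_sGen (i : ℕ) {k : ℕ} (hk : 2 ≤ k) :
    Commute (aGen m n i) (sGen m n k) := by
  unfold aGen sGen
  split_ifs with hi hk'
  · exact PresentedGroup.mk_eq_mk_of_mul_inv_mem (x := genA m n _ * genS m n _)
      (y := genS m n _ * genA m n _) <| Or.inl <| Or.inl <| Or.inr
        ⟨⟨i - 1, by omega⟩, ⟨k - 1, by omega⟩, by simp only; omega, by group⟩
  all_goals simp

theorem braidRel4_aGen_sGen_one (i : ℕ) : BraidRel4 (aGen m n i) (sGen m n 1) := by
  unfold BraidRel4 aGen sGen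
  split_ifs with hi hs
  · exact PresentedGroup.mk_eq_mk_of_mul_inv_mem
      (x := genA m n _ * genS m n _ * genA m n _ * genS m n _)
      (y := genS m n _ * genA m n _ * genS m n _ * genA m n _) <| Or.inl <| Or.inr
        ⟨⟨i - 1, by omega⟩, ⟨0, by omega⟩, rfl, by group⟩
  all_goals simp

theorem lamU_succ (l : ℕ) : lamU m n (l + 1) = lamU m n l * sGen m n (l + 1) :=
  List.prod_range_succ _ l

theorem lamD_succ (l : ℕ) : lamD m n (l + 1) = sGen m n (l + 1) * lamD m n l := by
  simp only [lamD, List.prod_range_succ', Nat.sub_zero, Nat.succ_eq_add_one,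
    Nat.add_sub_add_right]

theorem negLoopD_zero : negLoopD m n j 0 = (aGen m n j)⁻¹ := by
  simp [negLoopD, lamD]

theorem negLoopU_succ (l : ℕ) :
    negLoopU m n j (l + 1) = (sGen m n (l + 1))⁻¹ * negLoopU m n j l * sGen m n (l + 1) := by
  rw [negLoopU, negLoopU, lamU_succ]; group

theorem negLoopD_succ (l : ℕ) :
    negLoopD m n j (l + 1) = sGen m n (l + 1) * negLoopD m n j l * (sGen m n (l + 1))⁻¹ := by
  rw [negLoopD, negLoopD, lamD_succ]; group

theorem negCableLoopU_succ (q : ℕ) :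
    negCableLoopU m n j (q + 1) = negCableLoopU m n j q * negLoopU m n j q :=
  List.prod_range_succ _ q

theorem negCableLoopD_succ (q : ℕ) :
    negCableLoopD m n j (q + 1) = negLoopD m n j q * negCableLoopD m n j q := by
  simp only [negCableLoopD, List.prod_range_succ', Nat.add_sub_cancel, Nat.sub_zero,
    Nat.sub_sub, Nat.add_comm 1]

theorem negLoopD_commute_sGen {l k : ℕ} (h : l + 2 ≤ k) :
    Commute (negLoopD m n j l) (sGen m n k) := by
  induction l with
  | zero => rw [negLoopD_zero]; exact (aGen_commute_sGen j (by omega)).inv_left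
  | succ l ih =>
    have hl : Commute (sGen m n (l + 1)) (sGen m n k) := sGen_commute_sGen (by omega)
    rw [negLoopD_succ]
    exact (hl.mul_left (ih (by omega))).mul_left hl.inv_left

theorem negCableLoopD_commute_sGen (q : ℕ) :
    Commute (negCableLoopD m n j q) (sGen m n (q + 1)) := by
  refine Commute.list_prod_left _ _ fun x hx => ?_
  obtain ⟨i, hi, rfl⟩ := List.mem_map.mp hx
  rw [List.mem_range] at hi
  exact negLoopD_commute_sGen (by omega)

theorem braidRel4_negLoopD {l : ℕ} (hl : l + 1 ≤ n - 1) :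
    BraidRel4 (negLoopD m n j l) (sGen m n (l + 1))⁻¹ := by
  induction l with
  | zero => rw [negLoopD_zero]; exact (braidRel4_aGen_sGen_one j).inv
  | succ l ih =>
    rw [negLoopD_succ]
    exact (ih (by omega)).conj_braid (negLoopD_commute_sGen le_rfl) (sGen_braid (by omega) hl)

theorem negCableLoopD_mul_negLoopU {q : ℕ} (hq : q ≤ n - 1) :
    negCableLoopD m n j q * negLoopU m n j q = negLoopD m n j q * negCableLoopD m n j q := by
  induction q with
  | zero => simp [negCableLoopD, negLoopU, negLoopD_zero, lamU]
  | succ q ih =>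
    rw [negCableLoopD_succ, negLoopU_succ, negLoopD_succ]
    exact (braidRel4_negLoopD hq).conj_mul_eq (negCableLoopD_commute_sGen q) (ih (by omega))

theorem negCableLoopU_eq_negCableLoopD {q : ℕ} (hq : q ≤ n) :
    negCableLoopU m n j q = negCableLoopD m n j q := by
  induction q with
  | zero => rfl
  | succ q ih =>
    rw [negCableLoopU_succ, ih (by omega), negCableLoopD_succ]
    exact negCableLoopD_mul_negLoopU (by omega)

end MixedBraid

theorem negative_cable_looping_general (m n j q : ℕ) (hq2 : q ≤ n) :
    ((List.range q).map
      (fun i => (lamU m n i)⁻¹ * (aGen m n j)⁻¹ * lamU m n i)).prod =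
    ((List.range q).map
      (fun i => lamD m n (q - 1 - i) * (aGen m n j)⁻¹ * (lamD m n (q - 1 - i))⁻¹)).prod :=
  MixedBraid.negCableLoopU_eq_negCableLoopD hq2

/-- The two algebraic expressions for a negative looping between a `q`-strand
cable and the `j`-th fixed strand are equal. -/
theorem negative_cable_looping (m n j q : ℕ) (hm : 1 ≤ m) (hn : 1 ≤ n)
    (hj1 : 1 ≤ j) (hj2 : j ≤ m) (hq1 : 1 ≤ q) (hq2 : q ≤ n) :
    ((List.range q).map
      (fun i => (lamU m n i)⁻¹ * (aGen m n j)⁻¹ * lamU m n i)).prod =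
    ((List.range q).map
      (fun i => lamD m n (q - 1 - i) * (aGen m n j)⁻¹ * (lamD m n (q - 1 - i))⁻¹)).prod :=
  negative_cable_looping_general m n j q hq2
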